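/- Let V = [B₁, B₂, B₃] = (1/√2)·[[1,1,0,0, 1,1,0,0, 1,1,0,0],[1,-1,0,0, 0,0,1,1, 0,0,1,1],[0,0,1,1, 1,-1,0,0, 0,0,1,-1],[0,0,1,-1, 0,0,1,-1, 1,-1,0,0]] ∈ ℝ^{4×12}, whose columns v₁,…,v₁₂ comprise three mutually unbiased orthonormal bases of ℝ⁴. Then (v_j) is a 12-point spherical (2,2)-design for ℝ⁴: Σ_{j=1}^{12} Σ_{k=1}^{12} |⟨v_j,v_k⟩|⁴ = 18, the left side evaluating as 12·1 + 96·(1/2)⁴ + 36·0⁴ = 18. -/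

import Mathlib

/-! Within one orthonormal basis the Gram entries are `1` on the diagonal and `0` off it, while
between two mutually unbiased bases indexed by a `d`-element set they all have absolute value
`1/√d`. So for `k` such bases the fourth powers of the Gram entries add up to
`k·d + k(k-1)·d²·d⁻² = k·d + k(k-1)`, which is `12 + 6 = 18` for the three bases of `ℝ⁴` formed by
the columns of `B`. Their unbiasedness is a finite integer computation once `1/√2` is factored
out of `B`. -/

open Real Matrix

/-- The `4×12` matrix `B = [B₁,B₂,B₃]` whose columns are three mutually unbiased
orthonormal bases of `ℝ⁴`. -/
noncomputable def B : Matrix (Fin 4) (Fin 12) ℝ :=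
  (1 / Real.sqrt 2) •
    !![1, 1, 0, 0, 1, 1, 0, 0, 1, 1, 0, 0;
       1, -1, 0, 0, 0, 0, 1, 1, 0, 0, 1, 1;
       0, 0, 1, 1, 1, -1, 0, 0, 0, 0, 1, -1;
       0, 0, 1, -1, 0, 0, 1, -1, 1, -1, 0, 0]

open scoped InnerProductSpace

section MutuallyUnbiased

variable (𝕜 : Type*) {E ι κ : Type*} [RCLike 𝕜] [NormedAddCommGroup E] [InnerProductSpace 𝕜 E]

def IsMutuallyUnbiased [Fintype κ] (v : ι → κ → E) : Prop :=
  (∀ a, Orthonormal 𝕜 (v a)) ∧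
    ∀ a b, a ≠ b → ∀ i j, ‖⟪v a i, v b j⟫_𝕜‖ = 1 / √(Fintype.card κ)

variable {𝕜} [Fintype κ] {v : ι → κ → E}

lemma IsMutuallyUnbiased.norm_inner_pow_four [DecidableEq ι] [DecidableEq κ]
    (hv : IsMutuallyUnbiased 𝕜 v) (a b : ι) (i j : κ) :
    ‖⟪v a i, v b j⟫_𝕜‖ ^ 4 =
      if a = b then (if i = j then 1 else 0) else 1 / (Fintype.card κ : ℝ) ^ 2 := by
  split_ifs with hab hij
  · subst hab hij
    simp [inner_self_eq_norm_sq_to_K, (hv.1 a).1 i]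
  · subst hab
    simp [(hv.1 a).2 hij]
  · rw [hv.2 a b hab i j, show 4 = 2 * 2 from rfl, pow_mul, div_pow, sq_sqrt (Nat.cast_nonneg _)]
    simp

theorem IsMutuallyUnbiased.sum_norm_inner_pow_four [Fintype ι] [Nonempty κ]
    (hv : IsMutuallyUnbiased 𝕜 v) :
    ∑ p : ι × κ, ∑ q : ι × κ, ‖⟪v p.1 p.2, v q.1 q.2⟫_𝕜‖ ^ 4 =
      Fintype.card ι * Fintype.card κ + Fintype.card ι * (Fintype.card ι - 1) := by
  classical
  have hd : (Fintype.card κ : ℝ) ≠ 0 := by positivity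
  have row_sum (a : ι) (i : κ) :
      ∑ b, ∑ j, (if a = b then (if i = j then 1 else 0) else 1 / (Fintype.card κ : ℝ) ^ 2) =
        1 + ((Fintype.card ι : ℝ) - 1) / Fintype.card κ := by
    calc _ = ∑ b, ((if a = b then 1 - 1 / (Fintype.card κ : ℝ) else 0) + 1 / Fintype.card κ) := by
          refine Finset.sum_congr rfl fun b _ => ?_
          split_ifs
          · simp
          · simp
            field_simp
      _ = 1 + ((Fintype.card ι : ℝ) - 1) / Fintype.card κ := by
          rw [Finset.sum_add_distrib]
          simp
          ring
  simp only [hv.norm_inner_pow_four, Fintype.sum_prod_type, row_sum, Finset.sum_const,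
    Finset.card_univ, Fintype.card_prod, nsmul_eq_mul, Nat.cast_mul]
  field_simp

end MutuallyUnbiased

def intB : Matrix (Fin 4) (Fin 12) ℤ :=
  !![1, 1, 0, 0, 1, 1, 0, 0, 1, 1, 0, 0;
     1, -1, 0, 0, 0, 0, 1, 1, 0, 0, 1, 1;
     0, 0, 1, 1, 1, -1, 0, 0, 0, 0, 1, -1;
     0, 0, 1, -1, 0, 0, 1, -1, 1, -1, 0, 0]

lemma B_eq_smul_map_intB : B = (1 / √2) • intB.map (↑) := by
  rw [B]
  congr 1
  ext i j
  fin_cases i <;> fin_cases j <;> simp [intB]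

lemma transpose_B_mul_B : Bᵀ * B = (1 / 2 : ℝ) • (intBᵀ * intB).map (↑) := by
  rw [B_eq_smul_map_intB, transpose_smul, smul_mul, Matrix.mul_smul, smul_smul, ← transpose_map,
    div_mul_div_comm, one_mul, mul_self_sqrt zero_le_two]
  exact congrArg _ (Matrix.map_mul (f := Int.castRingHom ℝ)).symm

/-- Column `i + 4a` of `B` is the `i`-th vector of the `a`-th basis. -/
def columnIndex : Fin 3 × Fin 4 ≃ Fin 12 := finProdFinEquiv

lemma transpose_intB_mul_intB_of_fst_eq (a : Fin 3) (i j : Fin 4) :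
    (intBᵀ * intB) (columnIndex (a, i)) (columnIndex (a, j)) = if i = j then 2 else 0 := by
  revert a i j
  decide

lemma abs_transpose_intB_mul_intB_of_fst_ne {a b : Fin 3} (hab : a ≠ b) (i j : Fin 4) :
    |(intBᵀ * intB) (columnIndex (a, i)) (columnIndex (b, j))| = 1 := by
  revert a b i j
  decide

noncomputable def mubColumn (a : Fin 3) (i : Fin 4) : EuclideanSpace ℝ (Fin 4) :=
  WithLp.toLp 2 (Bᵀ (columnIndex (a, i)))

lemma inner_mubColumn (a b : Fin 3) (i j : Fin 4) :
    ⟪mubColumn a i, mubColumn b j⟫_ℝ = (Bᵀ * B) (columnIndex (a, i)) (columnIndex (b, j)) := by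
  simp [mubColumn, EuclideanSpace.inner_toLp_toLp, mul_apply, dotProduct, mul_comm]

lemma isMutuallyUnbiased_mubColumn : IsMutuallyUnbiased ℝ mubColumn := by
  refine ⟨fun a => orthonormal_iff_ite.2 fun i j => ?_, fun a b hab i j => ?_⟩
  · rw [inner_mubColumn, transpose_B_mul_B]
    simp [transpose_intB_mul_intB_of_fst_eq]
  · rw [Real.norm_eq_abs, inner_mubColumn, transpose_B_mul_B]
    simp only [Matrix.smul_apply, map_apply, smul_eq_mul, abs_mul, ← Int.cast_abs,
      abs_transpose_intB_mul_intB_of_fst_ne hab]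
    rw [Fintype.card_fin, Nat.cast_ofNat, show (4 : ℝ) = 2 ^ 2 by norm_num, sqrt_sq zero_le_two]
    norm_num

/-- The twelve columns `v₁,…,v₁₂` of `B` (three mutually unbiased orthonormal bases of `ℝ⁴`)
form a `12`-point spherical `(2,2)`-design for `ℝ⁴`:
`Σ_j Σ_k |⟨v_j, v_k⟩|⁴ = 18 = (1/8)·12²`. -/
theorem three_MUBs_two_two_design :
    ∑ j : Fin 12, ∑ k : Fin 12, |∑ i : Fin 4, B i j * B i k| ^ 4 = 18 := by
  calc ∑ j : Fin 12, ∑ k : Fin 12, |∑ i : Fin 4, B i j * B i k| ^ 4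
      = ∑ p : Fin 3 × Fin 4, ∑ q : Fin 3 × Fin 4, ‖⟪mubColumn p.1 p.2, mubColumn q.1 q.2⟫_ℝ‖ ^ 4 := by
        rw [← columnIndex.sum_comp]
        refine Finset.sum_congr rfl fun p _ => ?_
        rw [← columnIndex.sum_comp]
        simp only [Real.norm_eq_abs, inner_mubColumn, mul_apply, transpose_apply]
    _ = 18 := by
        rw [isMutuallyUnbiased_mubColumn.sum_norm_inner_pow_four]
        norm_num
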